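/- arXiv:2505.04661 — 4 statements merged into one kernel-verified Lean document; each statement's English description precedes it below -/
import Mathlib

section
/- Let N ∈ ℕ with N ≥ 1 and let σ be an indeterminate. For every x ∈ ℤ[σ, σ⁻¹] and every n ∈ ℕ with n ≥ 1, one has (σ - 1)ⁿ x ∈ ⟨σᴺ - 1⟩ if and only if (σ - 1) x ∈ ⟨σᴺ - 1⟩, where ⟨σᴺ - 1⟩ denotes the ideal of the Laurent polynomial ring ℤ[σ, σ⁻¹] generated by σᴺ - 1. -/
open LaurentPolynomial

open Polynomial in
private lemma toLaurent_dvd_toLaurent_iff {p : ℤ[X]} (hp : Prime p) (hX : ¬ p ∣ X)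
    (q : ℤ[X]) : toLaurent p ∣ toLaurent q ↔ p ∣ q := by
  constructor
  · rintro ⟨c, hc⟩
    obtain ⟨d, c', hc'⟩ := c.exists_T_pow
    have h2 : toLaurent (q * X ^ d) = toLaurent (p * c') := by
      simp only [map_mul, map_pow, toLaurent_X, T_pow, mul_one, hc', hc]
      ring
    have h3 : q * X ^ d = p * c' := toLaurent_injective h2
    have h4 : p ∣ q * X ^ d := ⟨c', h3⟩
    rcases hp.dvd_mul.mp h4 with h | h
    · exact h
    · exact absurd (hp.dvd_of_dvd_pow h) hX
  · exact fun h => map_dvd _ h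

open Polynomial in
private lemma prime_toLaurent {p : ℤ[X]} (hp : Prime p) (hX : ¬ p ∣ X) :
    Prime (toLaurent p) := by
  refine ⟨by simpa using hp.ne_zero, ?_, ?_⟩
  · intro hu
    exact hX ((toLaurent_dvd_toLaurent_iff hp hX X).mp (hu.dvd))
  · intro a b hab
    obtain ⟨da, pa, ha⟩ := a.exists_T_pow
    obtain ⟨db, pb, hb⟩ := b.exists_T_pow
    have h1 : toLaurent p ∣ toLaurent (pa * pb) := by
      rw [map_mul, ha, hb]
      exact (hab.mul_right (T da * T db)).trans (dvd_of_eq (by ring))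
    rcases hp.dvd_mul.mp ((toLaurent_dvd_toLaurent_iff hp hX _).mp h1) with h | h
    · left
      have := (toLaurent_dvd_toLaurent_iff hp hX pa).mpr h
      rw [ha] at this
      exact (isUnit_T (da : ℤ)).dvd_mul_right.mp this
    · right
      have := (toLaurent_dvd_toLaurent_iff hp hX pb).mpr h
      rw [hb] at this
      exact (isUnit_T (db : ℤ)).dvd_mul_right.mp this

/-- In ℤ[σ, σ⁻¹], (σ - 1)ⁿ x ∈ ⟨σᴺ - 1⟩ iff (σ - 1) x ∈ ⟨σᴺ - 1⟩. -/
theorem stmt2 (N : ℕ) (hN : 1 ≤ N) (x : LaurentPolynomial ℤ) (n : ℕ) (hn : 1 ≤ n) :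
    ((T 1 - 1) ^ n * x ∈ Ideal.span {(T (N : ℤ) : LaurentPolynomial ℤ) - 1}) ↔
      ((T 1 - 1) * x ∈ Ideal.span {(T (N : ℤ) : LaurentPolynomial ℤ) - 1}) := by
  -- basic players
  have hpX : Prime (Polynomial.X - 1 : Polynomial ℤ) := by
    simpa using Polynomial.prime_X_sub_C (1 : ℤ)
  have hX : ¬ (Polynomial.X - 1 : Polynomial ℤ) ∣ Polynomial.X := by
    intro h
    have := (Polynomial.dvd_iff_isRoot (a := (1 : ℤ))).mp (by simpa using h)
    simp [Polynomial.IsRoot] at this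
  have htl : Polynomial.toLaurent (Polynomial.X - 1 : Polynomial ℤ) = T 1 - 1 := by simp
  have htprime : Prime ((T 1 : LaurentPolynomial ℤ) - 1) := htl ▸ prime_toLaurent hpX hX
  set t : LaurentPolynomial ℤ := T 1 - 1 with ht
  set e : LaurentPolynomial ℤ := ∑ i ∈ Finset.range N, (T 1 : LaurentPolynomial ℤ) ^ i with he
  have hgeom : e * t = T (N : ℤ) - 1 := by
    rw [he, ht, geom_sum_mul, T_pow, mul_one]
  have hte : ¬ t ∣ e := by
    intro h
    have he2 : e = Polynomial.toLaurent (∑ i ∈ Finset.range N, (Polynomial.X : Polynomial ℤ) ^ i) := by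
      simp [he]
    rw [he2, ← htl] at h
    have := (toLaurent_dvd_toLaurent_iff hpX hX _).mp h
    have := (Polynomial.dvd_iff_isRoot (a := (1 : ℤ))).mp (by simpa using this)
    simp [Polynomial.IsRoot, Polynomial.eval_geom_sum] at this
    omega
  rw [Ideal.mem_span_singleton, Ideal.mem_span_singleton]
  constructor
  · -- forward, by induction on n
    induction n, hn using Nat.le_induction with
    | base => rw [pow_one]; exact id
    | succ n hn IH =>
      intro h
      obtain ⟨q, hq⟩ := h
      -- t * (t^n * x) = e * t * q, cancel t
      have hcancel : t ^ n * x = e * q := by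
        have h1 : t * (t ^ n * x) = t * (e * q) := by
          rw [← hgeom] at hq
          calc t * (t ^ n * x) = t ^ (n + 1) * x := by ring
            _ = e * t * q := hq
            _ = t * (e * q) := by ring
        exact mul_left_cancel₀ htprime.ne_zero h1
      -- t ∣ t^n * x since n ≥ 1
      have hdt : t ∣ e * q := by
        rw [← hcancel]
        exact ⟨t ^ (n - 1) * x, by rw [← mul_assoc, ← pow_succ']; congr 2; omega⟩
      have hq2 : t ∣ q := (htprime.dvd_mul.mp hdt).resolve_left hte
      obtain ⟨w, hw⟩ := hq2
      apply IH
      exact ⟨w, by rw [hcancel, hw, ← hgeom]; ring⟩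
  · rintro ⟨q, hq⟩
    exact ⟨t ^ (n - 1) * q, by
      have : t ^ n * x = t ^ (n - 1) * (t * x) := by
        rw [← mul_assoc, ← pow_succ]; congr 2; omega
      rw [this, hq]; ring⟩
end

section
/- Let E be a torsion-free abelian group, regard M = ℤ[σ, σ⁻¹] ⊗ E as a module over ℤ[σ, σ⁻¹], and let M̂ = lim← M/(σ-1)ⁿM be the I-adic completion at the ideal I = ⟨σ - 1⟩. If x ∈ M̂ satisfies (σ - 1)x = 0, then x = 0. -/
open LaurentPolynomial

lemma stmt4_flat_of_tf (E : Type*) [AddCommGroup E] [NoZeroSMulDivisors ℤ E] :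
    Module.Flat ℤ E := by
  rw [Module.Flat.iff_lTensor_injective']
  intro I
  obtain ⟨n, rfl⟩ : ∃ n : ℤ, I = Ideal.span {n} :=
    ⟨Submodule.IsPrincipal.generator I, (Ideal.span_singleton_generator I).symm⟩
  rcases eq_or_ne n 0 with rfl | hn
  · rw [show (Ideal.span {(0:ℤ)}) = ⊥ by simp]
    intro x y _
    exact Subsingleton.elim x y
  · set I := Ideal.span {n} with hI
    have hnI : n ∈ I := Ideal.mem_span_singleton_self n
    set g : ℤ →ₗ[ℤ] I := LinearMap.toSpanSingleton ℤ I ⟨n, hnI⟩ with hg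
    have hginj : Function.Injective g := by
      intro a b hab
      have : a • n = b • n := congrArg Subtype.val hab
      simpa [smul_eq_mul, mul_eq_mul_right_iff, hn] using this
    have hgsurj : Function.Surjective g := by
      rintro ⟨x, hx⟩
      obtain ⟨a, ha⟩ := Ideal.mem_span_singleton'.mp hx
      exact ⟨a, Subtype.ext (by simpa [hg, LinearMap.toSpanSingleton_apply, smul_eq_mul] using ha)⟩
    set e : ℤ ≃ₗ[ℤ] I := LinearEquiv.ofBijective g ⟨hginj, hgsurj⟩ with he
    -- injectivity of lTensor of the composite (multiplication by n on ℤ)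
    have hsmul : ∀ z : TensorProduct ℤ E ℤ,
        LinearMap.lTensor E (I.subtype ∘ₗ g) z = n • z := by
      intro z
      induction z using TensorProduct.induction_on with
      | zero => simp
      | tmul a b =>
          simp only [LinearMap.lTensor_tmul, LinearMap.coe_comp, Function.comp_apply,
            Submodule.coe_subtype, hg, LinearMap.toSpanSingleton_apply]
          rw [show ((b • (⟨n, hnI⟩ : I) : I) : ℤ) = n • b by
            simp [smul_eq_mul, mul_comm]]
          rw [TensorProduct.tmul_smul]
      | add u v hu hv => simp [hu, hv, smul_add]
    have hinj2 : Function.Injective (LinearMap.lTensor E (I.subtype ∘ₗ g)) := by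
      intro u v huv
      rw [hsmul, hsmul] at huv
      have hsub : n • (u - v) = 0 := by rw [smul_sub, huv, sub_self]
      have := congrArg (TensorProduct.rid ℤ E) hsub
      rw [map_smul, map_zero] at this
      have h0 : (TensorProduct.rid ℤ E) (u - v) = 0 := by
        rcases smul_eq_zero.mp this with h | h
        · exact absurd h hn
        · exact h
      have h1 : u - v = 0 := (TensorProduct.rid ℤ E).injective (by rw [h0, map_zero])
      exact sub_eq_zero.mp h1
    rw [LinearMap.lTensor_comp] at hinj2
    intro x y hxy
    obtain ⟨x', rfl⟩ := (LinearEquiv.lTensor E e).surjective x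
    obtain ⟨y', rfl⟩ := (LinearEquiv.lTensor E e).surjective y
    have hcoe : ∀ z, (LinearEquiv.lTensor E e) z = LinearMap.lTensor E g z := by
      intro z
      induction z using TensorProduct.induction_on with
      | zero => simp
      | tmul a b => simp [he, LinearEquiv.lTensor_tmul]; rfl
      | add u v hu hv => simp [hu, hv]
    rw [hcoe, hcoe] at hxy ⊢
    exact congrArg _ (hinj2 (by simpa using hxy))

lemma stmt4_c_ne_zero : ((T 1 : LaurentPolynomial ℤ) - 1) ≠ 0 := by
  have h : ((T 1 : LaurentPolynomial ℤ) - 1) = Polynomial.toLaurent (Polynomial.X - 1) := by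
    rw [map_sub, Polynomial.toLaurent_X, map_one]
  rw [h, Polynomial.toLaurent_ne_zero]
  simpa using Polynomial.X_sub_C_ne_zero (1 : ℤ)

lemma stmt4_regular (E : Type*) [AddCommGroup E] [NoZeroSMulDivisors ℤ E]
    {m : TensorProduct ℤ (LaurentPolynomial ℤ) E}
    (h : ((T 1 : LaurentPolynomial ℤ) - 1) • m = 0) : m = 0 := by
  have := stmt4_flat_of_tf E
  set c : LaurentPolynomial ℤ := T 1 - 1 with hc
  set f : LaurentPolynomial ℤ →ₗ[ℤ] LaurentPolynomial ℤ := LinearMap.mulLeft ℤ c with hf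
  have hfinj : Function.Injective f := by
    intro p q hpq
    exact mul_left_cancel₀ stmt4_c_ne_zero hpq
  have hrep : ∀ z : TensorProduct ℤ (LaurentPolynomial ℤ) E,
      c • z = LinearMap.rTensor E f z := by
    intro z
    induction z using TensorProduct.induction_on with
    | zero => simp
    | tmul a b =>
        rw [LinearMap.rTensor_tmul, TensorProduct.smul_tmul']
        simp [hf, smul_eq_mul]
    | add u v hu hv => simp [smul_add, hu, hv]
  have hinj : Function.Injective (LinearMap.rTensor E f) :=
    Module.Flat.rTensor_preserves_injective_linearMap f hfinj
  rw [hrep] at h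
  exact hinj (by simpa using h)

/-- Let E be a torsion-free abelian group, M = ℤ[σ,σ⁻¹] ⊗ E as a
module over ℤ[σ,σ⁻¹], and M̂ the I-adic completion at I = ⟨σ - 1⟩.  If
x ∈ M̂ satisfies (σ - 1)x = 0, then x = 0. -/
theorem stmt4 (E : Type*) [AddCommGroup E] [NoZeroSMulDivisors ℤ E]
    (x : AdicCompletion (Ideal.span {(T 1 : LaurentPolynomial ℤ) - 1})
      (TensorProduct ℤ (LaurentPolynomial ℤ) E))
    (hx : ((T 1 : LaurentPolynomial ℤ) - 1) • x = 0) :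
    x = 0 := by
  apply AdicCompletion.ext
  intro n
  rw [AdicCompletion.val_zero]
  obtain ⟨m, hm⟩ := Submodule.Quotient.mk_surjective _ (x.val (n+1))
  have hxn : x.val n = AdicCompletion.transitionMap (Ideal.span {(T 1 : LaurentPolynomial ℤ) - 1})
      (TensorProduct ℤ (LaurentPolynomial ℤ) E) (Nat.le_succ n) (x.val (n+1)) :=
    (x.property (Nat.le_succ n)).symm
  have h1 : ((T 1 : LaurentPolynomial ℤ) - 1) • x.val (n+1) = 0 := by
    have h := congrArg (fun y : AdicCompletion (Ideal.span {(T 1 : LaurentPolynomial ℤ) - 1})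
      (TensorProduct ℤ (LaurentPolynomial ℤ) E) => y.val (n+1)) hx
    exact h
  have h2 : ((T 1 : LaurentPolynomial ℤ) - 1) • m ∈
      ((Ideal.span {(T 1 : LaurentPolynomial ℤ) - 1}) ^ (n+1) • ⊤ :
        Submodule (LaurentPolynomial ℤ) (TensorProduct ℤ (LaurentPolynomial ℤ) E)) := by
    rw [← Submodule.Quotient.mk_eq_zero]
    rw [Submodule.Quotient.mk_smul, hm, h1]
  rw [Ideal.span_singleton_pow, Submodule.ideal_span_singleton_smul] at h2
  obtain ⟨y, -, hy⟩ := Set.mem_smul_set.mp h2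
  have h3 : ((T 1 : LaurentPolynomial ℤ) - 1) •
      (m - ((T 1 : LaurentPolynomial ℤ) - 1) ^ n • y) = 0 := by
    rw [smul_sub, smul_smul, ← pow_succ', hy, sub_self]
  have h4 : m = ((T 1 : LaurentPolynomial ℤ) - 1) ^ n • y := by
    have := stmt4_regular E h3
    rwa [sub_eq_zero] at this
  have h5 : m ∈ ((Ideal.span {(T 1 : LaurentPolynomial ℤ) - 1}) ^ n • ⊤ :
      Submodule (LaurentPolynomial ℤ) (TensorProduct ℤ (LaurentPolynomial ℤ) E)) := by
    rw [h4]
    exact Submodule.smul_mem_smul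
      (Ideal.pow_mem_pow (Ideal.mem_span_singleton_self ((T 1 : LaurentPolynomial ℤ) - 1)) n)
      Submodule.mem_top
  rw [hxn, ← hm]
  rw [AdicCompletion.transitionMap, Submodule.factorPow, Submodule.factor, Submodule.mapQ_apply]
  simpa [Submodule.Quotient.mk_eq_zero] using h5
end

section
/- Let A be a unital purely infinite simple C*-algebra, let ρ > 0, and let x ∈ A satisfy ‖x‖ > ρ. Then there exist a, b ∈ A such that a x b = 1, ‖a‖ < ρ⁻¹, and ‖b‖ ≤ 1. -/
/-- A unital simple C*-algebra is purely infinite if for every nonzero positive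
element `y` there are a projection `p` in the hereditary subalgebra generated
by `y` and an isometry `s` with `s* s = 1` and `s s* ≤ p`. -/
def IsPurelyInfinite (A : Type*) [CStarAlgebra A] [PartialOrder A]
    [StarOrderedRing A] : Prop :=
  ∀ y : A, 0 ≤ y → y ≠ 0 → ∃ p s : A, IsSelfAdjoint p ∧ IsIdempotentElem p ∧
    p ∈ closure {z : A | ∃ a : A, z = y * a * y} ∧ star s * s = 1 ∧ s * star s ≤ p

/-- If A is a unital purely infinite simple C*-algebra, ρ > 0,
and ‖x‖ > ρ, then there exist a, b ∈ A with a x b = 1, ‖a‖ < ρ⁻¹, ‖b‖ ≤ 1. -/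
theorem stmt7 (A : Type*) [CStarAlgebra A] [PartialOrder A] [StarOrderedRing A]
    (hsimple : Nontrivial A ∧ ∀ I : TwoSidedIdeal A, IsClosed (I : Set A) →
      (I : Set A) = {0} ∨ (I : Set A) = Set.univ)
    (hpi : IsPurelyInfinite A)
    (ρ : ℝ) (hρ : 0 < ρ) (x : A) (hx : ρ < ‖x‖) :
    ∃ a b : A, a * x * b = 1 ∧ ‖a‖ < ρ⁻¹ ∧ ‖b‖ ≤ 1 := by
  obtain ⟨hnt, -⟩ := hsimple
  set ρ' : ℝ := (ρ + ‖x‖) / 2 with hρ'def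
  have hρ'1 : ρ < ρ' := by rw [hρ'def]; linarith
  have hρ'2 : ρ' < ‖x‖ := by rw [hρ'def]; linarith
  have hρ'pos : 0 < ρ' := lt_trans hρ hρ'1
  set w : A := star x * x with hwdef
  have hw : 0 ≤ w := star_mul_self_nonneg x
  have hwsa : IsSelfAdjoint w := .of_nonneg hw
  have hnormw : ‖w‖ = ‖x‖ * ‖x‖ := CStarRing.norm_star_mul_self
  set f : ℝ → ℝ := fun t => max (t - ρ' ^ 2) 0 with hfdef
  have hfc : Continuous f := by fun_prop
  set y : A := cfc f w with hydef
  have hy0 : 0 ≤ y := cfc_nonneg (fun t _ => le_max_right _ _)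
  have hyne : y ≠ 0 := by
    intro h
    have hmem : ‖w‖ ∈ spectrum ℝ w := CStarAlgebra.norm_mem_spectrum_of_nonneg hw
    have hle := norm_apply_le_norm_cfc f w hmem hfc.continuousOn hwsa
    rw [← hydef, h, norm_zero] at hle
    have hf0 : 0 ≤ f ‖w‖ := le_max_right _ _
    rw [Real.norm_eq_abs, abs_of_nonneg hf0] at hle
    have hfw : 0 < f ‖w‖ := by
      rw [hfdef]
      refine lt_max_of_lt_left ?_
      rw [hnormw]
      nlinarith
    linarith
  obtain ⟨p, s, hpsa, hpidem, hpmem, hss, hssp⟩ := hpi y hy0 hyne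
  set g : ℝ → ℝ := fun t => (max t (ρ' ^ 2))⁻¹ with hgdef
  have hmaxpos : ∀ t : ℝ, 0 < max t (ρ' ^ 2) := fun t =>
    lt_of_lt_of_le (by positivity) (le_max_right _ _)
  have hgc : Continuous g := by
    rw [hgdef]
    exact (continuous_id.max continuous_const).inv₀ fun t => (hmaxpos t).ne'
  set d : A := cfc g w with hddef
  have hdsa : IsSelfAdjoint d := cfc_predicate g w
  -- `d * w = cfc (g · id)`
  have hdw : d * w = cfc (fun t : ℝ => g t * t) w := by
    rw [cfc_mul g (fun t : ℝ => t) w hgc.continuousOn continuous_id.continuousOn,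
      cfc_id' ℝ w hwsa, hddef]
  -- key pointwise identity
  have hfun : ∀ t : ℝ, g t * t * f t = f t := by
    intro t
    by_cases ht : t ≤ ρ' ^ 2
    · have hf0 : f t = 0 := by rw [hfdef]; exact max_eq_right (by linarith)
      rw [hf0, mul_zero]
    · have h1 : max t (ρ' ^ 2) = t := max_eq_left (le_of_not_ge ht)
      rw [hgdef]
      simp only [h1]
      rw [inv_mul_cancel₀ (by nlinarith : t ≠ 0), one_mul]
  have hdwy : d * w * y = y := by
    rw [hdw, hydef, ← cfc_mul _ f w (by fun_prop) hfc.continuousOn]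
    exact cfc_congr fun t _ => hfun t
  -- extend to the closure
  have hdwp : d * w * p = p := by
    have hclosed : IsClosed {z : A | d * w * z = z} :=
      isClosed_eq (continuous_mul_left (d * w)) continuous_id
    have hsub : {z : A | ∃ a : A, z = y * a * y} ⊆ {z : A | d * w * z = z} := by
      rintro _ ⟨a, rfl⟩
      show d * w * (y * a * y) = y * a * y
      calc d * w * (y * a * y) = (d * w * y) * (a * y) := by
            simp only [mul_assoc]
        _ = y * a * y := by rw [hdwy, mul_assoc]
    exact hclosed.closure_subset_iff.mpr hsub hpmem
  -- p ≤ 1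
  have hp1 : p ≤ 1 := by
    have h1 : (0 : A) ≤ 1 - p := by
      have h2 := star_mul_self_nonneg (1 - p)
      have hstar : star (1 - p) = 1 - p := by
        rw [star_sub, star_one, hpsa.star_eq]
      rw [hstar] at h2
      have hmul : (1 - p) * (1 - p) = 1 - p := by
        have h3 : p * p = p := hpidem
        noncomm_ring [h3]
      rwa [hmul] at h2
    exact sub_nonneg.mp h1
  -- star s * p * s = 1
  have hsps : star s * p * s = 1 := by
    have h1 : (1 : A) ≤ star s * p * s := by
      calc (1 : A) = star s * s * (star s * s) := by rw [hss, one_mul]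
        _ = star s * (s * star s) * s := by noncomm_ring
        _ ≤ star s * p * s := star_left_conjugate_le_conjugate hssp s
    have h2 : star s * p * s ≤ 1 := by
      calc star s * p * s ≤ star s * 1 * s := star_left_conjugate_le_conjugate hp1 s
        _ = 1 := by rw [mul_one, hss]
    exact le_antisymm h2 h1
  -- norms of s and p
  have hsnorm : ‖s‖ = 1 := by
    have h1 : ‖s‖ * ‖s‖ = 1 := by
      rw [← CStarRing.norm_star_mul_self, hss, norm_one]
    nlinarith [norm_nonneg s]
  have hpnorm : ‖p‖ ≤ 1 := by
    have h1 : ‖p‖ * ‖p‖ = ‖p‖ := by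
      conv_rhs => rw [← hpidem, show p * p = star p * p from by rw [hpsa.star_eq]]
      rw [CStarRing.norm_star_mul_self]
    nlinarith [norm_nonneg p]
  -- norm bound for d * star x
  have hu : ‖d * star x‖ ≤ ρ'⁻¹ := by
    have hdwd : d * w * d = cfc (fun t : ℝ => g t * t * g t) w := by
      rw [hdw, hddef, ← cfc_mul _ g w (by fun_prop) hgc.continuousOn]
    have hkey : (d * star x) * star (d * star x) = cfc (fun t : ℝ => g t * t * g t) w := by
      rw [star_mul, star_star, hdsa.star_eq, ← hdwd, hwdef]
      noncomm_ring
    have hbound : ‖cfc (fun t : ℝ => g t * t * g t) w‖ ≤ ρ'⁻¹ * ρ'⁻¹ := by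
      apply norm_cfc_le (by positivity)
      intro t ht
      have ht0 : 0 ≤ t := spectrum_nonneg_of_nonneg hw ht
      set m : ℝ := max t (ρ' ^ 2) with hmdef
      have hm2 : ρ' ^ 2 ≤ m := le_max_right _ _
      have htm : t ≤ m := le_max_left _ _
      have hmpos : 0 < m := hmaxpos t
      have hval : g t * t * g t = t / (m * m) := by
        rw [hgdef]
        simp only [← hmdef]
        field_simp
      rw [Real.norm_eq_abs, hval, abs_of_nonneg (by positivity)]
      have h1 : t / (m * m) ≤ m / (m * m) := by gcongr
      have h2 : m / (m * m) = m⁻¹ := by field_simp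
      have h3 : m⁻¹ ≤ (ρ' * ρ')⁻¹ := inv_anti₀ (by positivity) (by nlinarith)
      calc t / (m * m) ≤ m / (m * m) := h1
        _ = m⁻¹ := h2
        _ ≤ (ρ' * ρ')⁻¹ := h3
        _ = ρ'⁻¹ * ρ'⁻¹ := by rw [mul_inv]
    have h2 : ‖d * star x‖ * ‖d * star x‖ ≤ ρ'⁻¹ * ρ'⁻¹ := by
      rw [← CStarRing.norm_self_mul_star, hkey]
      exact hbound
    nlinarith [norm_nonneg (d * star x), inv_pos.mpr hρ'pos]
  refine ⟨star s * p * (d * star x), p * s, ?_, ?_, ?_⟩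
  · have e1 : star s * p * (d * star x) * x * (p * s)
        = star s * p * (d * (star x * x) * p) * s := by noncomm_ring
    rw [e1, ← hwdef]
    have e2 : d * (w * p) = p := by rw [← mul_assoc]; exact hdwp
    rw [mul_assoc d w p, e2]
    calc star s * p * p * s = star s * (p * p) * s := by noncomm_ring
      _ = 1 := by rw [hpidem, hsps]
  · have h2 : ‖star s‖ = 1 := by rw [norm_star, hsnorm]
    have h3 : ρ'⁻¹ < ρ⁻¹ := inv_strictAnti₀ hρ hρ'1
    calc ‖star s * p * (d * star x)‖ ≤ ‖star s * p‖ * ‖d * star x‖ := norm_mul_le _ _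
      _ ≤ (‖star s‖ * ‖p‖) * ‖d * star x‖ :=
          mul_le_mul_of_nonneg_right (norm_mul_le _ _) (norm_nonneg _)
      _ ≤ (1 * 1) * ρ'⁻¹ := by
          apply mul_le_mul _ hu (norm_nonneg _) (by norm_num)
          exact mul_le_mul h2.le hpnorm (norm_nonneg _) zero_le_one
      _ = ρ'⁻¹ := by ring
      _ < ρ⁻¹ := h3
  · calc ‖p * s‖ ≤ ‖p‖ * ‖s‖ := norm_mul_le _ _
      _ ≤ 1 * 1 := mul_le_mul hpnorm hsnorm.le (norm_nonneg _) zero_le_one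
      _ = 1 := one_mul 1
end

section
/- The fixed point algebra of R = { f ∈ C(S¹, M_N) : f(ωz) = s f(z) s* } under the rotation action γ_ζ(f)(z) = f(ζ⁻¹z) consists exactly of the constant functions whose (constant) value commutes with s, and this fixed point algebra is *-isomorphic to ℂᴺ. -/
open Complex

namespace Stmt11

variable (N : ℕ)

/-- The cyclic shift unitary in M_N. -/
def shiftMat : Matrix (Fin N) (Fin N) ℂ :=
  fun i j => if (j : ℕ) = ((i : ℕ) + 1) % N then 1 else 0

/-- ω = e^{2πi/N} as an element of the circle group. -/
noncomputable def omegaC : Circle := Circle.exp (2 * Real.pi / N)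

/-- The rotation action of the circle: (γ_ζ f)(z) = f(ζ⁻¹ z). -/
noncomputable def rot {M : Type*} [TopologicalSpace M] (ζ : Circle)
    (f : C(Circle, M)) : C(Circle, M) :=
  f.comp ⟨fun z => ζ⁻¹ * z, (continuous_const.mul continuous_id)⟩

/-- The set R = { f ∈ C(S¹, M_N) : f(ωz) = s f(z) s* for all z }. -/
def Rset : Set C(Circle, Matrix (Fin N) (Fin N) ℂ) :=
  {f | ∀ z : Circle, f (omegaC N * z) = shiftMat N * f z * star (shiftMat N)}

noncomputable def om (N : ℕ) : ℂ := Complex.exp (2 * Real.pi * Complex.I / N)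

lemma om_ne_zero (N : ℕ) : om N ≠ 0 := Complex.exp_ne_zero _

lemma om_prim {N : ℕ} (hN : N ≠ 0) : IsPrimitiveRoot (om N) N :=
  Complex.isPrimitiveRoot_exp N hN

lemma om_pow_N {N : ℕ} (hN : N ≠ 0) : om N ^ N = 1 := (om_prim hN).pow_eq_one

lemma om_pow_mod {N : ℕ} (hN : N ≠ 0) (m : ℕ) : om N ^ (m % N) = om N ^ m := by
  conv_rhs => rw [← Nat.div_add_mod m N]
  rw [pow_add, pow_mul, om_pow_N hN, one_pow, one_mul]

lemma om_inj {N : ℕ} (hN : N ≠ 0) {i j : Fin N} (h : om N ^ (i : ℕ) = om N ^ (j : ℕ)) :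
    i = j :=
  Fin.ext ((om_prim hN).pow_inj i.isLt j.isLt h)

lemma om_conj (N : ℕ) : (starRingEnd ℂ) (om N) = (om N)⁻¹ := by
  rw [om, ← Complex.exp_conj, ← Complex.exp_neg]
  congr 1
  simp only [map_div₀, map_mul, map_ofNat, Complex.conj_ofReal, Complex.conj_I,
    Complex.conj_natCast]
  ring

lemma geom_fin {N : ℕ} (x : ℂ) (hx : x ^ N = 1) :
    ∑ l : Fin N, x ^ (l : ℕ) = if x = 1 then (N : ℂ) else 0 := by
  rw [Fin.sum_univ_eq_sum_range (fun l => x ^ l)]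
  split_ifs with h
  · simp [h]
  · rw [geom_sum_eq h, hx, sub_self, zero_div]

noncomputable def vM (N : ℕ) : Matrix (Fin N) (Fin N) ℂ :=
  fun i j => om N ^ ((i : ℕ) * (j : ℕ))

noncomputable def wM (N : ℕ) : Matrix (Fin N) (Fin N) ℂ :=
  fun i j => (N : ℂ)⁻¹ * (om N ^ ((i : ℕ) * (j : ℕ)))⁻¹

noncomputable def FM (N : ℕ) (a : Fin N → ℂ) : Matrix (Fin N) (Fin N) ℂ :=
  vM N * Matrix.diagonal a * wM N

lemma pow_ratio (N i j k : ℕ) :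
    om N ^ (i * k) * (om N ^ (k * j))⁻¹ = (om N ^ i * (om N ^ j)⁻¹) ^ k := by
  rw [mul_pow, ← pow_mul, inv_pow, ← pow_mul, mul_comm j k]

lemma ratio_pow_N {N : ℕ} (hN : N ≠ 0) (i j : ℕ) :
    (om N ^ i * (om N ^ j)⁻¹) ^ N = 1 := by
  rw [mul_pow, inv_pow, ← pow_mul, ← pow_mul, mul_comm i N, mul_comm j N,
    pow_mul, pow_mul, om_pow_N hN, one_pow, one_pow, inv_one, mul_one]

lemma ratio_eq_one_iff {N : ℕ} (i j : ℕ) :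
    om N ^ i * (om N ^ j)⁻¹ = 1 ↔ om N ^ i = om N ^ j := by
  rw [mul_inv_eq_one₀ (pow_ne_zero _ (om_ne_zero N))]

lemma vw {N : ℕ} (hN : N ≠ 0) : vM N * wM N = 1 := by
  ext i j
  rw [Matrix.mul_apply, Matrix.one_apply]
  have h1 : ∀ k : Fin N, vM N i k * wM N k j
      = (N : ℂ)⁻¹ * (om N ^ (i : ℕ) * (om N ^ (j : ℕ))⁻¹) ^ (k : ℕ) := by
    intro k
    simp only [vM, wM]
    rw [← pow_ratio]
    ring
  rw [Finset.sum_congr rfl fun k _ => h1 k, ← Finset.mul_sum,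
    geom_fin _ (ratio_pow_N hN (i : ℕ) (j : ℕ))]
  simp only [ratio_eq_one_iff]
  have hNC : (N : ℂ) ≠ 0 := Nat.cast_ne_zero.mpr hN
  by_cases h : i = j
  · subst h
    simp [hNC, inv_mul_cancel₀ hNC]
  · have : ¬ om N ^ (i : ℕ) = om N ^ (j : ℕ) := fun hh => h (om_inj hN hh)
    simp [h, this]

lemma wv {N : ℕ} (hN : N ≠ 0) : wM N * vM N = 1 :=
  mul_eq_one_comm.mp (vw hN)


lemma FM_one {N : ℕ} (hN : N ≠ 0) : FM N 1 = 1 := by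
  have h : Matrix.diagonal (1 : Fin N → ℂ) = 1 := Matrix.diagonal_one
  rw [FM, h, mul_one, vw hN]

lemma FM_mul {N : ℕ} (hN : N ≠ 0) (a b : Fin N → ℂ) :
    FM N (a * b) = FM N a * FM N b := by
  simp only [FM, mul_assoc]
  rw [← mul_assoc (wM N) (vM N) _, wv hN, one_mul, ← mul_assoc (Matrix.diagonal a),
    Matrix.diagonal_mul_diagonal]
  rfl

lemma FM_add {N : ℕ} (a b : Fin N → ℂ) : FM N (a + b) = FM N a + FM N b := by
  have h : Matrix.diagonal (a + b) = Matrix.diagonal a + Matrix.diagonal b :=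
    (Matrix.diagonal_add a b).symm
  simp only [FM, h, Matrix.add_mul, Matrix.mul_add]

lemma FM_zero {N : ℕ} : FM N 0 = 0 := by
  have h : Matrix.diagonal (0 : Fin N → ℂ) = 0 := Matrix.diagonal_zero
  simp [FM, h]

lemma FM_smul {N : ℕ} (c : ℂ) (a : Fin N → ℂ) : FM N (c • a) = c • FM N a := by
  rw [FM, FM, Matrix.diagonal_smul, Matrix.mul_smul, Matrix.smul_mul]

lemma star_wM {N : ℕ} : star (wM N) = (N : ℂ)⁻¹ • vM N := by
  ext i j
  rw [Matrix.star_apply, Matrix.smul_apply]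
  simp only [wM, vM, star_mul', star_inv₀]
  rw [smul_eq_mul]
  congr 1
  · simp
  · rw [star_pow, Complex.star_def, om_conj, ← inv_pow, inv_inv, mul_comm (j : ℕ) (i : ℕ)]

lemma star_vM {N : ℕ} (hN : N ≠ 0) : star (vM N) = (N : ℂ) • wM N := by
  ext i j
  rw [Matrix.star_apply, Matrix.smul_apply]
  simp only [vM, wM]
  rw [star_pow, Complex.star_def, om_conj, ← inv_pow, smul_eq_mul, ← mul_assoc,
    mul_inv_cancel₀ (Nat.cast_ne_zero.mpr hN), one_mul, mul_comm (j : ℕ) (i : ℕ)]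

lemma FM_star {N : ℕ} (hN : N ≠ 0) (a : Fin N → ℂ) :
    FM N (star a) = star (FM N a) := by
  rw [FM, FM, star_mul, star_mul, star_wM, star_vM hN,
    Matrix.star_eq_conjTranspose (Matrix.diagonal a), Matrix.diagonal_conjTranspose]
  simp only [Matrix.smul_mul, Matrix.mul_smul, smul_smul, mul_assoc]
  rw [mul_inv_cancel₀ (Nat.cast_ne_zero.mpr hN), one_smul]


lemma FM_apply {N : ℕ} (a : Fin N → ℂ) (i j : Fin N) :
    FM N a i j = (N : ℂ)⁻¹ * ∑ k : Fin N,
      a k * (om N ^ (i : ℕ) * (om N ^ (j : ℕ))⁻¹) ^ (k : ℕ) := by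
  rw [FM, Matrix.mul_apply, Finset.mul_sum]
  refine Finset.sum_congr rfl fun k _ => ?_
  rw [Matrix.mul_diagonal]
  simp only [vM, wM]
  rw [← pow_ratio]
  ring

lemma FM_chi {N : ℕ} (hN : N ≠ 0) : FM N (fun k => om N ^ (k : ℕ)) = shiftMat N := by
  ext i j
  rw [FM_apply, shiftMat]
  have h1 : ∀ k : Fin N, om N ^ (k : ℕ) * (om N ^ (i : ℕ) * (om N ^ (j : ℕ))⁻¹) ^ (k : ℕ)
      = (om N ^ ((i : ℕ) + 1) * (om N ^ (j : ℕ))⁻¹) ^ (k : ℕ) := by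
    intro k
    rw [mul_pow (om N ^ ((i:ℕ)+1)), pow_add, pow_one, mul_pow (om N ^ (i:ℕ)), mul_pow,
      ← mul_assoc, mul_comm (om N ^ (k:ℕ))]
  rw [Finset.sum_congr rfl fun k _ => h1 k]
  have h2 : (om N ^ ((i : ℕ) + 1) * (om N ^ (j : ℕ))⁻¹) ^ N = 1 := ratio_pow_N hN _ _
  rw [geom_fin _ h2]
  have h3 : (om N ^ ((i : ℕ) + 1) * (om N ^ (j : ℕ))⁻¹ = 1) ↔ ((j : ℕ) = ((i : ℕ) + 1) % N) := by
    rw [ratio_eq_one_iff, ← om_pow_mod hN ((i : ℕ) + 1)]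
    constructor
    · intro h
      have : (⟨((i : ℕ) + 1) % N, Nat.mod_lt _ (Nat.pos_of_ne_zero hN)⟩ : Fin N) = j :=
        om_inj hN h
      exact congrArg Fin.val this.symm
    · intro h
      rw [h]
  simp only [h3]
  have hNC : (N : ℂ) ≠ 0 := Nat.cast_ne_zero.mpr hN
  split_ifs with h
  · rw [inv_mul_cancel₀ hNC]
  · rw [mul_zero]

lemma FM_recover {N : ℕ} (hN : N ≠ 0) (a : Fin N → ℂ) :
    wM N * FM N a * vM N = Matrix.diagonal a := by
  rw [FM]
  simp only [← mul_assoc]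
  rw [wv hN, one_mul, mul_assoc, wv hN, mul_one]

lemma FM_inj {N : ℕ} (hN : N ≠ 0) : Function.Injective (FM N) := by
  intro a b h
  have h2 : Matrix.diagonal a = Matrix.diagonal b := by
    rw [← FM_recover hN a, ← FM_recover hN b, h]
  funext i
  rw [← Matrix.diagonal_apply_eq a i, ← Matrix.diagonal_apply_eq b i, h2]

lemma FM_comm_s {N : ℕ} (hN : N ≠ 0) (a : Fin N → ℂ) :
    FM N a * shiftMat N = shiftMat N * FM N a := by
  rw [← FM_chi hN, ← FM_mul hN, ← FM_mul hN, mul_comm a]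

lemma star_shiftMat {N : ℕ} (hN : N ≠ 0) :
    star (shiftMat N) = FM N (fun k => (om N ^ (k : ℕ))⁻¹) := by
  have h : (star fun k : Fin N => om N ^ (k : ℕ)) = fun k : Fin N => (om N ^ (k : ℕ))⁻¹ := by
    funext k
    rw [Pi.star_apply, star_pow, Complex.star_def, om_conj, inv_pow]
  rw [← FM_chi hN, ← FM_star hN, h]

lemma chi_mul_inv {N : ℕ} :
    ((fun k : Fin N => om N ^ (k : ℕ)) * (fun k : Fin N => (om N ^ (k : ℕ))⁻¹)) = 1 := by
  funext k
  exact mul_inv_cancel₀ (pow_ne_zero _ (om_ne_zero N))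

lemma s_mul_star_s {N : ℕ} (hN : N ≠ 0) : shiftMat N * star (shiftMat N) = 1 := by
  rw [star_shiftMat hN, ← FM_chi hN, ← FM_mul hN, chi_mul_inv, FM_one hN]

lemma star_s_mul_s {N : ℕ} (hN : N ≠ 0) : star (shiftMat N) * shiftMat N = 1 :=
  mul_eq_one_comm.mp (s_mul_star_s hN)

lemma FM_surj {N : ℕ} (hN : N ≠ 0) (m : Matrix (Fin N) (Fin N) ℂ)
    (hm : m * shiftMat N = shiftMat N * m) : ∃ a, FM N a = m := by
  set x := wM N * m * vM N with hx
  have sandwich : ∀ p q : Matrix (Fin N) (Fin N) ℂ,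
      (wM N * p * vM N) * (wM N * q * vM N) = wM N * (p * q) * vM N := by
    intro p q
    simp only [mul_assoc]
    rw [← mul_assoc (vM N) (wM N) (q * vM N), vw hN, one_mul]
  have hDchi : wM N * shiftMat N * vM N = Matrix.diagonal (fun k : Fin N => om N ^ (k : ℕ)) := by
    rw [← FM_chi hN, FM_recover hN]
  have hcomm : x * Matrix.diagonal (fun k : Fin N => om N ^ (k : ℕ))
      = Matrix.diagonal (fun k : Fin N => om N ^ (k : ℕ)) * x := by
    rw [← hDchi, hx, sandwich, sandwich, hm]
  have hoff : ∀ i j : Fin N, i ≠ j → x i j = 0 := by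
    intro i j hij
    have h1 := congrFun (congrFun hcomm i) j
    rw [Matrix.mul_diagonal, Matrix.diagonal_mul] at h1
    have h2 : x i j * (om N ^ (j : ℕ) - om N ^ (i : ℕ)) = 0 := by
      rw [mul_sub, h1, mul_comm, sub_self]
    rcases mul_eq_zero.mp h2 with h | h
    · exact h
    · exact absurd (om_inj hN (sub_eq_zero.mp h)) (Ne.symm hij)
  refine ⟨fun i => x i i, ?_⟩
  have hxd : x = Matrix.diagonal (fun i => x i i) := by
    ext i j
    by_cases h : i = j
    · subst h; rw [Matrix.diagonal_apply_eq]
    · rw [Matrix.diagonal_apply_ne _ h, hoff i j h]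
  rw [FM, ← hxd, hx]
  simp only [mul_assoc]
  rw [vw hN, mul_one, ← mul_assoc, vw hN, one_mul]

/-- The fixed point algebra of R under the rotation action
consists exactly of the constant functions whose value commutes with s, and it
is *-isomorphic to ℂᴺ (the latter expressed by an injective unital
*-homomorphism from ℂᴺ with range exactly the fixed point algebra). -/
theorem stmt11 (hN : 2 ≤ N) :
    ({f ∈ Rset N | ∀ ζ : Circle, rot ζ f = f} =
      {f : C(Circle, Matrix (Fin N) (Fin N) ℂ) |
        ∃ m : Matrix (Fin N) (Fin N) ℂ,
          m * shiftMat N = shiftMat N * m ∧ ∀ z : Circle, f z = m}) ∧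
    ∃ Φ : (Fin N → ℂ) →⋆ₐ[ℂ] C(Circle, Matrix (Fin N) (Fin N) ℂ),
      Function.Injective Φ ∧
      Set.range Φ = {f ∈ Rset N | ∀ ζ : Circle, rot ζ f = f} := by
  have hN0 : N ≠ 0 := by omega
  have hset : {f ∈ Rset N | ∀ ζ : Circle, rot ζ f = f} =
      {f : C(Circle, Matrix (Fin N) (Fin N) ℂ) |
        ∃ m : Matrix (Fin N) (Fin N) ℂ,
          m * shiftMat N = shiftMat N * m ∧ ∀ z : Circle, f z = m} := by
    ext f
    constructor
    · rintro ⟨hR, hfix⟩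
      have hconst : ∀ z : Circle, f z = f 1 := by
        intro z
        have h2 := ContinuousMap.congr_fun (hfix z) z
        simp only [rot, ContinuousMap.comp_apply, ContinuousMap.coe_mk] at h2
        rw [inv_mul_cancel] at h2
        exact h2.symm
      refine ⟨f 1, ?_, hconst⟩
      have h3 := hR 1
      rw [mul_one, hconst (omegaC N)] at h3
      calc f 1 * shiftMat N
          = shiftMat N * f 1 * star (shiftMat N) * shiftMat N := by rw [← h3]
        _ = shiftMat N * f 1 * (star (shiftMat N) * shiftMat N) := by rw [mul_assoc]
        _ = shiftMat N * f 1 := by rw [star_s_mul_s hN0, mul_one]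
    · rintro ⟨m, hc, hconst⟩
      refine ⟨fun z => ?_, fun ζ => ?_⟩
      · rw [hconst, hconst]
        calc m = m * (shiftMat N * star (shiftMat N)) := by rw [s_mul_star_s hN0, mul_one]
          _ = m * shiftMat N * star (shiftMat N) := by rw [mul_assoc]
          _ = shiftMat N * m * star (shiftMat N) := by rw [hc]
      · ext z
        simp only [rot, ContinuousMap.comp_apply, ContinuousMap.coe_mk]
        rw [hconst, hconst]
  refine ⟨hset, ?_⟩
  refine ⟨{ toFun := fun a => ContinuousMap.const Circle (FM N a)
            map_one' := by ext z; simp [FM_one hN0]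
            map_mul' := fun a b => by ext z; simp [FM_mul hN0]
            map_zero' := by ext z; simp [FM_zero]
            map_add' := fun a b => by ext z; simp [FM_add]
            commutes' := fun c => by
              ext z
              simp [Algebra.algebraMap_eq_smul_one, FM_smul, FM_one hN0]
            map_star' := fun a => by ext z; simp [FM_star hN0] }, ?_, ?_⟩
  · intro a b h
    have h1 : ContinuousMap.const Circle (FM N a) = ContinuousMap.const Circle (FM N b) := h
    exact FM_inj hN0 (ContinuousMap.congr_fun h1 1)
  · rw [hset]
    ext g
    constructor
    · rintro ⟨a, rfl⟩
      exact ⟨FM N a, FM_comm_s hN0 a, fun z => rfl⟩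
    · rintro ⟨m, hc, hg⟩
      obtain ⟨a, ha⟩ := FM_surj hN0 m hc
      refine ⟨a, ?_⟩
      ext z
      rw [hg z, ← ha]
      rfl

end Stmt11
end
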